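/- Let K be an algebraically closed field and let G_1, ..., G_n ∈ K[λ_1, ..., λ_n] be homogeneous polynomials of degree d-1 with d ≥ 3, satisfying the Euler-type relation ∑_{i=1}^n λ_i G_i = 0 identically. Then G_1, ..., G_n have a common nontrivial zero in K^n \ {0}. -/

import Mathlib

/-!
Suppose the `G i` had no common zero besides `0`. By the Nullstellensatz
`X k ^ N = ∑ i, C k i * G i` for some `N > 0` and all `k`, and since `deg G i ≥ 2` we can write
`G = A *ᵥ X` with the entries of `A` in the ideal of the variables. Then `M = C * A` satisfies
`M *ᵥ X = (X k ^ N)ₖ`, and such an `M` has `det M ≡ ∏ k, X k ^ (N - 1)` modulo `J = (X k ^ N)ₖ`,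
so `det M ∉ J`. On the other hand, the relation `X ⬝ᵥ G = 0` makes `X ᵥ* adj C` a syzygy of the
`X k ^ N`, whose entries therefore lie in `J`; multiplying by `C` gives `det C * X m ∈ J` for every
`m`. As `det A` lies in the ideal of the variables, `det M = det C * det A ∈ J`, a contradiction.
-/

open MvPolynomial Matrix

namespace Matrix

variable {n R : Type*} [CommRing R] [Fintype n] [DecidableEq n]

theorem det_mem_of_forall_mem [Nonempty n] {I : Ideal R} {A : Matrix n n R}
    (hA : ∀ i j, A i j ∈ I) : A.det ∈ I := by
  rw [det_eq_sum_mul_adjugate_row A (Classical.arbitrary n)]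
  exact Ideal.sum_mem _ fun j _ => Ideal.mul_mem_right _ _ (hA _ j)

theorem det_add_eq_sum_det_ite (A B : Matrix n n R) :
    (A + B).det = ∑ T : Finset n, (of fun i j => if i ∈ T then A i j else B i j).det :=
  (detRowAlternating.map_add_univ A B).trans <| Finset.sum_congr rfl fun T _ => congrArg det <| by
    ext i j
    by_cases hi : i ∈ T <;> simp [Finset.piecewise, hi]

end Matrix

namespace MvPolynomial

section Ideal

variable {σ R : Type*} [CommSemiring R]

noncomputable def varPowIdeal (U : Set σ) (N : ℕ) : Ideal (MvPolynomial σ R) :=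
  Ideal.span ((fun l => X l ^ N) '' U)

variable {U : Set σ} {N : ℕ}

theorem mem_varPowIdeal_iff {f : MvPolynomial σ R} :
    f ∈ varPowIdeal U N ↔ ∀ β ∈ f.support, ∃ l ∈ U, N ≤ β l := by
  have : (fun l => (X l : MvPolynomial σ R) ^ N) '' U =
      (fun s => monomial s 1) '' ((fun l => Finsupp.single l N) '' U) := by
    simp only [Set.image_image, X_pow_eq_monomial]
  simp [varPowIdeal, this, mem_ideal_span_monomial_image, Finsupp.single_le_iff]

theorem varPowIdeal_mono {V : Set σ} (h : U ⊆ V) :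
    (varPowIdeal U N : Ideal (MvPolynomial σ R)) ≤ varPowIdeal V N :=
  Ideal.span_mono (Set.image_mono h)

theorem X_pow_mem_varPowIdeal {l : σ} (hl : l ∈ U) :
    (X l : MvPolynomial σ R) ^ N ∈ varPowIdeal U N :=
  Ideal.subset_span ⟨l, hl, rfl⟩

theorem mem_varPowIdeal_of_mul_X_mem {f : MvPolynomial σ R} {m : σ} (hm : m ∉ U)
    (h : f * X m ∈ varPowIdeal U N) : f ∈ varPowIdeal U N := by
  classical
  rw [mem_varPowIdeal_iff] at h ⊢
  intro β hβ
  obtain ⟨l, hl, hle⟩ :=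
    h (β + Finsupp.single m 1) (by simpa [mem_support_iff, coeff_mul_X] using hβ)
  have hlm : m ≠ l := fun e => hm (e ▸ hl)
  exact ⟨l, hl, by simpa [Finsupp.single_apply, hlm] using hle⟩

theorem mem_varPowIdeal_univ_of_dotProduct_eq_zero [Fintype σ] {b : σ → MvPolynomial σ R}
    (hb : b ⬝ᵥ (fun k => X k ^ N) = 0) (k : σ) : b k ∈ varPowIdeal Set.univ N := by
  classical
  rw [mem_varPowIdeal_iff]
  intro β hβ
  by_contra! hlt
  have hcoeff : coeff (β + Finsupp.single k N) (b ⬝ᵥ fun k => X k ^ N) = coeff β (b k) := by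
    rw [dotProduct, coeff_sum, Finset.sum_eq_single k]
    · simp [X_pow_eq_monomial, coeff_mul_monomial']
    · intro j _ hj
      rw [X_pow_eq_monomial, coeff_mul_monomial', if_neg]
      rw [Finsupp.single_le_iff]
      simpa [Finsupp.single_apply, hj] using hlt j (Set.mem_univ j)
    · simp
  rw [hb, coeff_zero] at hcoeff
  exact mem_support_iff.mp hβ hcoeff.symm

theorem prod_X_pow_pred_notMem_varPowIdeal [Fintype σ] [Nontrivial R] (hN : 0 < N) :
    ∏ k : σ, (X k : MvPolynomial σ R) ^ (N - 1) ∉ varPowIdeal Set.univ N := by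
  classical
  simp only [X_pow_eq_monomial, ← monomial_sum_one, mem_varPowIdeal_iff, support_monomial,
    one_ne_zero, if_false, Finset.mem_singleton, forall_eq, Finsupp.finsetSum_apply,
    Finsupp.single_apply, Finset.sum_ite_eq', Finset.mem_univ, if_true, not_exists, not_and, not_le]
  intro l _
  omega

theorem exists_sum_mul_X_of_mem_idealOfVars_sq [Fintype σ] {p : MvPolynomial σ R}
    (hp : p ∈ idealOfVars σ R ^ 2) :
    ∃ a : σ → MvPolynomial σ R, (∀ i, a i ∈ idealOfVars σ R) ∧ ∑ i, a i * X i = p := by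
  rw [pow_two, ← Ideal.smul_eq_mul] at hp
  obtain ⟨a, ha, rfl⟩ := (Submodule.mem_ideal_smul_span_iff_exists_sum _ _ _).mp hp
  exact ⟨a, ha, by simp [Finsupp.sum_fintype]⟩

theorem IsHomogeneous.mem_pow_idealOfVars {p : MvPolynomial σ R} {n : ℕ}
    (hp : p.IsHomogeneous n) : p ∈ idealOfVars σ R ^ n :=
  (mem_pow_idealOfVars_iff n p).mpr fun β hβ => by
    by_contra hlt
    exact mem_support_iff.mp hβ (hp.coeff_eq_zero (by omega))

end Ideal

theorem exists_X_pow_mem_of_zeroLocus_subset_zero {σ K : Type*} [Field K] [IsAlgClosed K]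
    [Finite σ] {I : Ideal (MvPolynomial σ K)} (h : zeroLocus K I ⊆ {0}) :
    ∃ N, 0 < N ∧ ∀ k, X k ^ N ∈ I := by
  have hrad : idealOfVars σ K ≤ I.radical := by
    rw [← vanishingIdeal_zeroLocus_eq_radical (K := K), Ideal.span_le]
    rintro _ ⟨k, rfl⟩ x hx
    simp [Set.mem_singleton_iff.mp (h hx)]
  obtain ⟨N, hN⟩ := Ideal.exists_pow_le_of_le_radical_of_fg hrad (idealOfVars_fg σ K)
  have hXk (k : σ) : X k ∈ idealOfVars σ K := Ideal.subset_span ⟨k, rfl⟩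
  exact ⟨N + 1, N.succ_pos, fun k =>
    hN <| Ideal.pow_le_pow_right N.le_succ (Ideal.pow_mem_pow (hXk k) _)⟩

section Det

variable {σ R : Type*} [CommRing R] [Fintype σ] [DecidableEq σ] {N : ℕ}

theorem det_mem_varPowIdeal_of_mulVec_X_mem {Q : Matrix σ σ (MvPolynomial σ R)} {U : Set σ}
    {m : σ} (hm : m ∉ U) (hQ : ∀ k, (Q *ᵥ X) k ∈ varPowIdeal U N) :
    Q.det ∈ varPowIdeal U N := by
  refine mem_varPowIdeal_of_mul_X_mem hm ?_
  have : Q.det * X m = (Q.adjugate *ᵥ (Q *ᵥ X)) m := by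
    rw [mulVec_mulVec, adjugate_mul, smul_mulVec, one_mulVec]
    rfl
  rw [this]
  exact Ideal.sum_mem _ fun k _ => Ideal.mul_mem_left _ _ (hQ k)

theorem det_notMem_varPowIdeal_of_mulVec_X_eq [Nontrivial R] (hN : 0 < N)
    {M : Matrix σ σ (MvPolynomial σ R)} (hM : M *ᵥ X = fun k => X k ^ N) :
    M.det ∉ varPowIdeal Set.univ N := by
  -- Expanding `M = (M - D) + D` by rows, every term using a row of `M - D` lies in the ideal.
  set D : Matrix σ σ (MvPolynomial σ R) := diagonal fun k => X k ^ (N - 1)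
  have hD : D *ᵥ X = fun k => X k ^ N := by
    ext k
    rw [mulVec_diagonal, ← pow_succ, Nat.sub_add_cancel hN]
  have hW : (M - D) *ᵥ X = 0 := by rw [sub_mulVec, hM, hD, sub_self]
  have hterm (T : Finset σ) (hT : T.Nonempty) :
      (of fun i j => if i ∈ T then (M - D) i j else D i j).det ∈ varPowIdeal Set.univ N := by
    obtain ⟨m, hm⟩ := hT
    refine varPowIdeal_mono (Set.subset_univ _)
      (det_mem_varPowIdeal_of_mulVec_X_mem (U := (↑T)ᶜ) (m := m) (by simpa using hm) fun k => ?_)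
    by_cases hk : k ∈ T
    · have : ((of fun i j => if i ∈ T then (M - D) i j else D i j) *ᵥ X) k = ((M - D) *ᵥ X) k := by
        simp [mulVec, dotProduct, hk]
      rw [this, hW]
      exact Ideal.zero_mem _
    · have : ((of fun i j => if i ∈ T then (M - D) i j else D i j) *ᵥ X) k = (D *ᵥ X) k := by
        simp [mulVec, dotProduct, hk]
      rw [this, hD]
      exact X_pow_mem_varPowIdeal (by simpa using hk)
  have hexp := det_add_eq_sum_det_ite (M - D) D
  rw [sub_add_cancel, ← Finset.add_sum_erase _ _ (Finset.mem_univ ∅)] at hexp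
  have hD0 : (of fun i j => if i ∈ (∅ : Finset σ) then (M - D) i j else D i j) = D := by
    ext
    simp
  rw [hD0, det_diagonal] at hexp
  intro hmem
  apply prod_X_pow_pred_notMem_varPowIdeal (σ := σ) (R := R) hN
  rw [eq_sub_of_add_eq hexp.symm]
  exact sub_mem hmem (Ideal.sum_mem _ fun T hT =>
    hterm T (Finset.nonempty_iff_ne_empty.mpr (Finset.ne_of_mem_erase hT)))

theorem det_mul_X_mem_varPowIdeal {C : Matrix σ σ (MvPolynomial σ R)} {G : σ → MvPolynomial σ R}
    (hC : C *ᵥ G = fun k => X k ^ N) (hG : X ⬝ᵥ G = 0) (m : σ) :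
    C.det * X m ∈ varPowIdeal Set.univ N := by
  set b := X ᵥ* C.adjugate
  have hbC : b ᵥ* C = C.det • X := by rw [vecMul_vecMul, adjugate_mul, vecMul_smul, vecMul_one]
  have hb : b ⬝ᵥ (fun k => X k ^ N) = 0 := by
    rw [← hC, dotProduct_mulVec, hbC, smul_dotProduct, hG, smul_zero]
  have : C.det * X m = (b ᵥ* C) m := by rw [hbC]; rfl
  rw [this]
  exact Ideal.sum_mem _ fun k _ =>
    Ideal.mul_mem_right _ _ (mem_varPowIdeal_univ_of_dotProduct_eq_zero hb k)

theorem exists_X_pow_notMem_span_of_dotProduct_eq_zero [Nonempty σ] [Nontrivial R] (hN : 0 < N)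
    {G : σ → MvPolynomial σ R} (hG : ∀ i, G i ∈ idealOfVars σ R ^ 2) (hrel : X ⬝ᵥ G = 0) :
    ∃ k, X k ^ N ∉ Ideal.span (Set.range G) := by
  by_contra! hX
  choose C hC using fun k => Ideal.mem_span_range_iff_exists_fun.mp (hX k)
  choose A hA hAG using fun i => exists_sum_mul_X_of_mem_idealOfVars_sq (hG i)
  have hCG : of C *ᵥ G = fun k => X k ^ N := _root_.funext hC
  have hAX : of A *ᵥ X = G := _root_.funext hAG
  apply det_notMem_varPowIdeal_of_mulVec_X_eq hN (M := of C * of A)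
    (by rw [← mulVec_mulVec, hAX, hCG])
  obtain ⟨t, ht⟩ := Ideal.mem_span_range_iff_exists_fun.mp (det_mem_of_forall_mem (A := of A) hA)
  rw [det_mul, ← ht, Finset.mul_sum]
  exact Ideal.sum_mem _ fun m _ => by
    rw [mul_left_comm]
    exact Ideal.mul_mem_left _ _ (det_mul_X_mem_varPowIdeal hCG hrel m)

end Det

end MvPolynomial

theorem stmt8 {K : Type*} [Field K] [IsAlgClosed K]
    (n d : ℕ) (hn : 1 ≤ n) (hd : 3 ≤ d)
    (G : Fin n → MvPolynomial (Fin n) K)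
    (hhom : ∀ i, (G i).IsHomogeneous (d - 1))
    (hrel : ∑ i, MvPolynomial.X i * G i = 0) :
    ∃ x : Fin n → K, x ≠ 0 ∧ ∀ i, MvPolynomial.eval x (G i) = 0 := by
  have : Nonempty (Fin n) := ⟨⟨0, hn⟩⟩
  by_contra! hG
  have hzero : zeroLocus K (Ideal.span (Set.range G)) ⊆ {0} := fun x hx => by
    by_contra hx0
    obtain ⟨i, hi⟩ := hG x hx0
    exact hi (by simpa using hx _ (Ideal.subset_span ⟨i, rfl⟩))
  obtain ⟨N, hN, hX⟩ := exists_X_pow_mem_of_zeroLocus_subset_zero hzero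
  obtain ⟨k, hk⟩ := exists_X_pow_notMem_span_of_dotProduct_eq_zero hN
    (fun i => Ideal.pow_le_pow_right (by omega) (hhom i).mem_pow_idealOfVars) hrel
  exact hk (hX k)
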